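/- arXiv:1809.08734 — 3 statements merged into one kernel-verified Lean document; each statement's English description precedes it below -/
import Mathlib

section
/- Thresholding theorem (Chan–Esedoglu–Nikolova, discrete version): let E(u) = ⟨c, u⟩ + J(u) where J : ℝᵛ → ℝ is convex, positively homogeneous, and satisfies the generalized coarea formula J(u) = ∫₀¹ J(1_{u > t}) dt for all u with values in [0,1]. If u* minimizes E over [0,1]ᵛ, then for almost every threshold t ∈ (0,1) the binary function 1_{u* > t} minimizes E over {0,1}ᵛ. -/
/-!
By the coarea formula, and the layer-cake identity `uᵢ = ∫₀¹ 1_{uᵢ > t} dt` for the linear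
part, `E(u*) = ∫₀¹ E(1_{u* > t}) dt`. Each `1_{u* > t}` is admissible for the relaxed problem,
so the integrand is `≥ E(u*)`; having mean exactly `E(u*)`, it equals `E(u*)` for a.e. `t`.
Since binary vectors are admissible too, `E(1_{u* > t}) = E(u*) ≤ E(v)` for every binary `v`.
-/

open MeasureTheory

noncomputable def thresh {V : Type*} (u : V → ℝ) (t : ℝ) : V → ℝ :=
  fun x => if t < u x then 1 else 0

namespace MeasureTheory

variable {α β : Type*} [MeasurableSpace α] {μ : Measure α}

theorem Integrable.comp_measurable_of_finite {E : Type*} [NormedAddCommGroup E]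
    [MeasurableSpace β] [Finite β] [MeasurableSingletonClass β] [IsFiniteMeasure μ]
    {g : α → β} (hg : Measurable g) (f : β → E) : Integrable (f ∘ g) μ :=
  Integrable.of_finite.comp_measurable hg

theorem ae_eq_const_of_ae_le_of_integral_eq [IsProbabilityMeasure μ] {f : α → ℝ} {m : ℝ}
    (hf : Integrable f μ) (hle : ∀ᵐ a ∂μ, m ≤ f a) (hint : ∫ a, f a ∂μ = m) :
    ∀ᵐ a ∂μ, f a = m := by
  have hconst : (fun _ => m) =ᵐ[μ] f :=
    (integral_eq_iff_of_ae_le (integrable_const m) hf hle).1 (by simp [hint])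
  filter_upwards [hconst] with a ha using ha.symm

end MeasureTheory

instance isProbabilityMeasure_restrict_Ioo_zero_one :
    IsProbabilityMeasure (volume.restrict (Set.Ioo (0 : ℝ) 1)) :=
  ⟨by simp⟩

section Thresholding

variable {V : Type*}

theorem thresh_eq_indicator (u : V → ℝ) (t : ℝ) : thresh u t = {x | t < u x}.indicator 1 := by
  ext x
  simp [thresh, Set.indicator]

theorem thresh_mem_Icc (u : V → ℝ) (t : ℝ) (x : V) : thresh u t x ∈ Set.Icc (0 : ℝ) 1 := by
  unfold thresh
  split_ifs <;> simp

theorem measurable_setOf_lt (u : V → ℝ) : Measurable fun t : ℝ => {x | t < u x} :=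
  measurable_set_iff.2 fun _ => measurableSet_Iio.mem

/-- `t ↦ thresh u t` takes only finitely many values, so no regularity of `F` is needed. -/
theorem integrable_comp_thresh [Finite V] {μ : Measure ℝ} [IsFiniteMeasure μ]
    (F : (V → ℝ) → ℝ) (u : V → ℝ) : Integrable (fun t => F (thresh u t)) μ := by
  simp_rw [thresh_eq_indicator]
  exact Integrable.comp_measurable_of_finite (measurable_setOf_lt u) fun s => F (s.indicator 1)

theorem setIntegral_thresh_apply (u : V → ℝ) (x : V) (hx : u x ∈ Set.Icc (0 : ℝ) 1) :
    ∫ t in Set.Ioo (0 : ℝ) 1, thresh u t x = u x := by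
  have hind : (fun t => thresh u t x) = (Set.Iio (u x)).indicator 1 := by
    ext t
    simp [thresh, Set.indicator]
  rw [hind, setIntegral_indicator measurableSet_Iio, Set.Ioo_inter_Iio, min_eq_right hx.2]
  simp [hx.1]

theorem setIntegral_sum_mul_thresh [Fintype V] (c u : V → ℝ)
    (hu : ∀ x, u x ∈ Set.Icc (0 : ℝ) 1) :
    ∫ t in Set.Ioo (0 : ℝ) 1, ∑ x, c x * thresh u t x = ∑ x, c x * u x := by
  rw [integral_finsetSum _ fun x _ => integrable_comp_thresh (fun v => c x * v x) u]
  simp_rw [integral_const_mul, setIntegral_thresh_apply u _ (hu _)]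

theorem setIntegral_energy_thresh [Fintype V] (c : V → ℝ) (J : (V → ℝ) → ℝ) (u : V → ℝ)
    (hu : ∀ x, u x ∈ Set.Icc (0 : ℝ) 1)
    (hcoarea : J u = ∫ t in Set.Ioo (0 : ℝ) 1, J (thresh u t)) :
    ∫ t in Set.Ioo (0 : ℝ) 1, ((∑ x, c x * thresh u t x) + J (thresh u t)) =
      (∑ x, c x * u x) + J u := by
  rw [integral_add (integrable_comp_thresh (fun v => ∑ x, c x * v x) u)
      (integrable_comp_thresh J u),
    setIntegral_sum_mul_thresh c u hu, hcoarea]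

end Thresholding

theorem thresholding_theorem_general {V : Type*} [Fintype V]
    (c : V → ℝ) (J : (V → ℝ) → ℝ)
    (hcoarea : ∀ u : V → ℝ, (∀ x, u x ∈ Set.Icc (0 : ℝ) 1) →
      J u = ∫ t in Set.Ioo (0 : ℝ) 1, J (thresh u t))
    (E : (V → ℝ) → ℝ) (hE : ∀ u, E u = (∑ x, c x * u x) + J u)
    (ustar : V → ℝ) (hustar_mem : ∀ x, ustar x ∈ Set.Icc (0 : ℝ) 1)
    (hustar_min : ∀ u : V → ℝ, (∀ x, u x ∈ Set.Icc (0 : ℝ) 1) → E ustar ≤ E u) :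
    ∀ᵐ t ∂(volume.restrict (Set.Ioo (0 : ℝ) 1)),
      ∀ v : V → ℝ, (∀ x, v x = 0 ∨ v x = 1) → E (thresh ustar t) ≤ E v := by
  have hmean : ∫ t in Set.Ioo (0 : ℝ) 1, E (thresh ustar t) = E ustar := by
    simp only [hE]
    exact setIntegral_energy_thresh c J ustar hustar_mem (hcoarea ustar hustar_mem)
  have hae : ∀ᵐ t ∂(volume.restrict (Set.Ioo (0 : ℝ) 1)), E (thresh ustar t) = E ustar :=
    ae_eq_const_of_ae_le_of_integral_eq (integrable_comp_thresh E ustar)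
      (ae_of_all _ fun t => hustar_min _ (thresh_mem_Icc ustar t)) hmean
  filter_upwards [hae] with t ht v hv
  rw [ht]
  exact hustar_min v fun x => by rcases hv x with h | h <;> simp [h]

/-- Thresholding theorem (Chan–Esedoglu–Nikolova, discrete version): if `J` is convex,
positively homogeneous and satisfies the generalized coarea formula, and `u*` minimizes
`E(u) = ⟨c,u⟩ + J(u)` over `[0,1]ᵛ`, then for a.e. `t ∈ (0,1)` the binary function
`1_{u* > t}` minimizes `E` over `{0,1}ᵛ`. -/
theorem thresholding_theorem {V : Type*} [Fintype V]
    (c : V → ℝ) (J : (V → ℝ) → ℝ)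
    (hJconv : ConvexOn ℝ Set.univ J)
    (hJhom : ∀ (s : ℝ) (u : V → ℝ), 0 ≤ s → J (s • u) = s * J u)
    (hcoarea : ∀ u : V → ℝ, (∀ x, u x ∈ Set.Icc (0 : ℝ) 1) →
      J u = ∫ t in Set.Ioo (0 : ℝ) 1, J (thresh u t))
    (E : (V → ℝ) → ℝ) (hE : ∀ u, E u = (∑ x, c x * u x) + J u)
    (ustar : V → ℝ) (hustar_mem : ∀ x, ustar x ∈ Set.Icc (0 : ℝ) 1)
    (hustar_min : ∀ u : V → ℝ, (∀ x, u x ∈ Set.Icc (0 : ℝ) 1) → E ustar ≤ E u) :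
    ∀ᵐ t ∂(volume.restrict (Set.Ioo (0 : ℝ) 1)),
      ∀ v : V → ℝ, (∀ x, v x = 0 ∨ v x = 1) → E (thresh ustar t) ≤ E v :=
  thresholding_theorem_general c J hcoarea E hE ustar hustar_mem hustar_min
end

section
/- Discrete max-flow/min-cut duality for continuous max-flow: in the finite-dimensional setting with a discrete divergence operator div : ℝᴱ → ℝᵛ, the value of max{Σₓ ps(x) : |p(e)| ≤ α, ps(x) ≤ Cs(x), pt(x) ≤ Ct(x), (div p - ps + pt)(x) = 0} equals the value of min over u ∈ [0,1]ᵛ of Σₓ[(1-u)Cs + u·Ct](x) + α·TV(u), where TV(u) = Σₑ |(∇u)(e)| and ∇ is the adjoint of -div. -/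
/-!
Both optimal values are values of the saddle function
`L(u, p) = Σ [(1 - u) Cs + u Ct] - ⟨∇u, p⟩` on the boxes `u ∈ [0,1]ᵛ`, `|p| ≤ α`.
Maximizing over `p` gives the relaxed min-cut energy (take `p = -α sign ∇u`); since
`-⟨∇u, p⟩ = ⟨div p, u⟩`, minimizing over `u` gives `Σ min (Cs, Ct + div p)`, the value of the flow
`ps = min (Cs, Ct + div p)`, `pt = ps - div p`. As `L` is affine in each variable, the von Neumann
minimax theorem provides a saddle point, where both values are attained and equal, and weak
duality identifies them with the supremum and the infimum.
-/

open Finset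

theorem csSup_eq_csInf_of_forall_le_of_mem {α : Type*} [ConditionallyCompleteLattice α]
    {s t : Set α} {a b : α} (ha : a ∈ s) (hb : b ∈ t) (hba : b ≤ a)
    (h : ∀ x ∈ s, ∀ y ∈ t, x ≤ y) : sSup s = sInf t := by
  have hab : a ≤ b := h a ha b hb
  rw [IsGreatest.csSup_eq ⟨ha, fun x hx => (h x hx b hb).trans hba⟩,
    IsLeast.csInf_eq ⟨hb, fun y hy => hba.trans (h a ha y hy)⟩]
  exact hab.antisymm hba

theorem exists_isSaddlePointOn_of_affine {E F : Type*}
    [AddCommGroup E] [Module ℝ E] [TopologicalSpace E] [IsTopologicalAddGroup E]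
    [ContinuousSMul ℝ E] [T2Space E] [FiniteDimensional ℝ E]
    [AddCommGroup F] [Module ℝ F] [TopologicalSpace F] [IsTopologicalAddGroup F]
    [ContinuousSMul ℝ F] [T2Space F] [FiniteDimensional ℝ F]
    {X : Set E} {Y : Set F} (hXne : X.Nonempty) (hXconv : Convex ℝ X) (hXcpt : IsCompact X)
    (hYne : Y.Nonempty) (hYconv : Convex ℝ Y) (hYcpt : IsCompact Y) {f : E → F → ℝ}
    (hfl : ∀ y, ∃ (φ : E →ₗ[ℝ] ℝ) (c : ℝ), ∀ x, f x y = φ x + c)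
    (hfr : ∀ x, ∃ (ψ : F →ₗ[ℝ] ℝ) (c : ℝ), ∀ y, f x y = ψ y + c) :
    ∃ a ∈ X, ∃ b ∈ Y, IsSaddlePointOn X Y f a b := by
  refine Sion.exists_isSaddlePointOn hXne hXconv hXcpt (fun y _ => ?_) (fun y _ => ?_)
    hYconv hYne hYcpt (fun x _ => ?_) (fun x _ => ?_)
  · obtain ⟨φ, c, hφ⟩ := hfl y
    simp only [hφ]
    exact (φ.continuous_of_finiteDimensional.add_const c).lowerSemicontinuous
      |>.lowerSemicontinuousOn _
  · obtain ⟨φ, c, hφ⟩ := hfl y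
    simp only [hφ]
    exact ((φ.convexOn hXconv).add_const c).quasiconvexOn
  · obtain ⟨ψ, c, hψ⟩ := hfr x
    simp only [hψ]
    exact (ψ.continuous_of_finiteDimensional.add_const c).upperSemicontinuous
      |>.upperSemicontinuousOn _
  · obtain ⟨ψ, c, hψ⟩ := hfr x
    simp only [hψ]
    exact ((ψ.concaveOn hYconv).add_const c).quasiconcaveOn

namespace MaxFlowMinCut

variable {V E : Type*} [Fintype V] [Fintype E] (grad : (V → ℝ) →ₗ[ℝ] (E → ℝ)) (Cs Ct : V → ℝ)

def relaxedCutEnergy (α : ℝ) (u : V → ℝ) : ℝ :=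
  (∑ x, ((1 - u x) * Cs x + u x * Ct x)) + α * ∑ e, |grad u e|

def lagrangian (u : V → ℝ) (p : E → ℝ) : ℝ :=
  (∑ x, ((1 - u x) * Cs x + u x * Ct x)) - ∑ e, grad u e * p e

theorem lagrangian_le_relaxedCutEnergy {α : ℝ} {p : E → ℝ} (hp : ∀ e, |p e| ≤ α) (u : V → ℝ) :
    lagrangian grad Cs Ct u p ≤ relaxedCutEnergy grad Cs Ct α u := by
  rw [lagrangian, relaxedCutEnergy, sub_eq_add_neg, ← sum_neg_distrib, mul_sum]
  gcongr with e
  calc -(grad u e * p e) ≤ |grad u e| * |p e| := (neg_le_abs _).trans (abs_mul _ _).le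
    _ ≤ |grad u e| * α := by gcongr; exact hp e
    _ = α * |grad u e| := mul_comm _ _

theorem exists_lagrangian_eq_relaxedCutEnergy {α : ℝ} (hα : 0 ≤ α) (u : V → ℝ) :
    ∃ p : E → ℝ, (∀ e, |p e| ≤ α) ∧
      lagrangian grad Cs Ct u p = relaxedCutEnergy grad Cs Ct α u := by
  refine ⟨fun e => if 0 ≤ grad u e then -α else α, fun e => ?_, ?_⟩
  · dsimp only
    split_ifs <;> simp [abs_of_nonneg hα]
  · rw [lagrangian, relaxedCutEnergy, sub_eq_add_neg, ← sum_neg_distrib, mul_sum]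
    congr 1
    refine sum_congr rfl fun e _ => ?_
    split_ifs with h
    · rw [abs_of_nonneg h]; ring
    · rw [abs_of_neg (not_le.mp h)]; ring

theorem lagrangian_affine_left (p : E → ℝ) :
    ∃ (φ : (V → ℝ) →ₗ[ℝ] ℝ) (c : ℝ), ∀ u, lagrangian grad Cs Ct u p = φ u + c := by
  refine ⟨Fintype.linearCombination ℝ (Ct - Cs) - Fintype.linearCombination ℝ p ∘ₗ grad,
    ∑ x, Cs x, fun u => ?_⟩
  simp only [lagrangian, LinearMap.sub_apply, LinearMap.comp_apply,
    Fintype.linearCombination_apply, smul_eq_mul, Pi.sub_apply]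
  rw [sub_add_eq_add_sub, ← sum_add_distrib]
  congr 1
  exact sum_congr rfl fun x _ => by ring

theorem lagrangian_affine_right (u : V → ℝ) :
    ∃ (ψ : (E → ℝ) →ₗ[ℝ] ℝ) (c : ℝ), ∀ p, lagrangian grad Cs Ct u p = ψ p + c := by
  refine ⟨-Fintype.linearCombination ℝ (grad u), ∑ x, ((1 - u x) * Cs x + u x * Ct x),
    fun p => ?_⟩
  simp only [lagrangian, LinearMap.neg_apply, Fintype.linearCombination_apply, smul_eq_mul,
    mul_comm (p _)]
  ring

variable {grad} {dvg : (E → ℝ) →ₗ[ℝ] (V → ℝ)}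

theorem lagrangian_eq_sum_dvg
    (hadj : ∀ (u : V → ℝ) (p : E → ℝ), ∑ x, dvg p x * u x = -∑ e, grad u e * p e)
    (u : V → ℝ) (p : E → ℝ) :
    lagrangian grad Cs Ct u p = ∑ x, ((1 - u x) * Cs x + u x * (Ct x + dvg p x)) := by
  rw [lagrangian, sub_eq_add_neg, ← hadj, ← sum_add_distrib]
  exact sum_congr rfl fun x _ => by ring

theorem sum_le_lagrangian
    (hadj : ∀ (u : V → ℝ) (p : E → ℝ), ∑ x, dvg p x * u x = -∑ e, grad u e * p e)
    {ps pt : V → ℝ} {p : E → ℝ} (hps : ∀ x, ps x ≤ Cs x) (hpt : ∀ x, pt x ≤ Ct x)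
    (hcons : ∀ x, dvg p x - ps x + pt x = 0) {u : V → ℝ} (hu : ∀ x, u x ∈ Set.Icc (0 : ℝ) 1) :
    ∑ x, ps x ≤ lagrangian grad Cs Ct u p := by
  rw [lagrangian_eq_sum_dvg Cs Ct hadj]
  gcongr with x
  obtain ⟨hu0, hu1⟩ := hu x
  calc ps x = (1 - u x) * ps x + u x * (pt x + dvg p x) := by linear_combination -u x * hcons x
    _ ≤ (1 - u x) * Cs x + u x * (Ct x + dvg p x) :=
      add_le_add (mul_le_mul_of_nonneg_left (hps x) (by linarith))
        (mul_le_mul_of_nonneg_left (by linarith [hpt x]) hu0)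

theorem exists_lagrangian_eq_sum_min
    (hadj : ∀ (u : V → ℝ) (p : E → ℝ), ∑ x, dvg p x * u x = -∑ e, grad u e * p e)
    (p : E → ℝ) : ∃ u : V → ℝ, (∀ x, u x ∈ Set.Icc (0 : ℝ) 1) ∧
      lagrangian grad Cs Ct u p = ∑ x, min (Cs x) (Ct x + dvg p x) := by
  classical
  refine ⟨fun x => if Cs x ≤ Ct x + dvg p x then 0 else 1, fun x => ?_, ?_⟩
  · dsimp only
    split_ifs <;> simp
  · rw [lagrangian_eq_sum_dvg Cs Ct hadj]
    refine sum_congr rfl fun x _ => ?_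
    split_ifs with h
    · rw [min_eq_left h]; ring
    · rw [min_eq_right (not_le.mp h).le]; ring

end MaxFlowMinCut

open MaxFlowMinCut in
theorem maxflow_mincut_duality_general {V E : Type*} [Fintype V] [Fintype E]
    (grad : (V → ℝ) →ₗ[ℝ] (E → ℝ)) (dvg : (E → ℝ) →ₗ[ℝ] (V → ℝ))
    (hadj : ∀ (u : V → ℝ) (p : E → ℝ), ∑ x, dvg p x * u x = -∑ e, grad u e * p e)
    (Cs Ct : V → ℝ) (α : ℝ) (hα : 0 < α) :
    sSup { S : ℝ | ∃ (ps pt : V → ℝ) (p : E → ℝ),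
        (∀ e, |p e| ≤ α) ∧ (∀ x, ps x ≤ Cs x) ∧ (∀ x, pt x ≤ Ct x) ∧
        (∀ x, dvg p x - ps x + pt x = 0) ∧ S = ∑ x, ps x } =
      sInf { T : ℝ | ∃ u : V → ℝ, (∀ x, u x ∈ Set.Icc (0 : ℝ) 1) ∧
        T = (∑ x, ((1 - u x) * Cs x + u x * Ct x)) + α * ∑ e, |grad u e| } := by
  obtain ⟨u', hu', p', hp', hsaddle⟩ := exists_isSaddlePointOn_of_affine
    (X := Set.univ.pi fun _ : V => Set.Icc (0 : ℝ) 1)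
    (Y := Set.univ.pi fun _ : E => Set.Icc (-α) α)
    (Set.univ_pi_nonempty_iff.mpr fun _ => Set.nonempty_Icc.mpr zero_le_one)
    (convex_pi fun _ _ => convex_Icc _ _) (isCompact_univ_pi fun _ => isCompact_Icc)
    (Set.univ_pi_nonempty_iff.mpr fun _ => Set.nonempty_Icc.mpr (by linarith))
    (convex_pi fun _ _ => convex_Icc _ _) (isCompact_univ_pi fun _ => isCompact_Icc)
    (lagrangian_affine_left grad Cs Ct) (lagrangian_affine_right grad Cs Ct)
  obtain ⟨q, hq, hq_eq⟩ := exists_lagrangian_eq_relaxedCutEnergy grad Cs Ct hα.le u'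
  obtain ⟨u₀, hu₀, hu₀_eq⟩ := exists_lagrangian_eq_sum_min Cs Ct hadj p'
  refine csSup_eq_csInf_of_forall_le_of_mem
    ⟨fun x => min (Cs x) (Ct x + dvg p' x), fun x => min (Cs x) (Ct x + dvg p' x) - dvg p' x, p',
      fun e => abs_le.mpr (Set.mem_univ_pi.mp hp' e), fun x => min_le_left _ _,
      fun x => by linarith [min_le_right (Cs x) (Ct x + dvg p' x)], fun x => by ring, rfl⟩
    ⟨u', Set.mem_univ_pi.mp hu', rfl⟩ ?_ ?_
  · calc relaxedCutEnergy grad Cs Ct α u' = lagrangian grad Cs Ct u' q := hq_eq.symm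
      _ ≤ lagrangian grad Cs Ct u₀ p' :=
        hsaddle u₀ (Set.mem_univ_pi.mpr hu₀) q (Set.mem_univ_pi.mpr fun e => abs_le.mp (hq e))
      _ = _ := hu₀_eq
  · rintro _ ⟨ps, pt, p, hp, hps, hpt, hcons, rfl⟩ _ ⟨u, hu, rfl⟩
    exact (sum_le_lagrangian Cs Ct hadj hps hpt hcons hu).trans
      (lagrangian_le_relaxedCutEnergy grad Cs Ct hp u)

/-- Discrete max-flow / min-cut duality: the optimal value of the (discrete) continuous
max-flow model equals the optimal value of the convex relaxed min-cut model. Here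
`V` is a finite set of pixels, `E` a finite set of edges, `grad` a discrete gradient and
`dvg = -gradᵀ` its negative adjoint (discrete divergence). -/
theorem maxflow_mincut_duality {V E : Type*} [Fintype V] [Fintype E] [Nonempty V]
    (grad : (V → ℝ) →ₗ[ℝ] (E → ℝ)) (dvg : (E → ℝ) →ₗ[ℝ] (V → ℝ))
    (hadj : ∀ (u : V → ℝ) (p : E → ℝ), ∑ x, dvg p x * u x = -∑ e, grad u e * p e)
    (Cs Ct : V → ℝ) (α : ℝ) (hα : 0 < α) :
    sSup { S : ℝ | ∃ (ps pt : V → ℝ) (p : E → ℝ),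
        (∀ e, |p e| ≤ α) ∧ (∀ x, ps x ≤ Cs x) ∧ (∀ x, pt x ≤ Ct x) ∧
        (∀ x, dvg p x - ps x + pt x = 0) ∧ S = ∑ x, ps x } =
      sInf { T : ℝ | ∃ u : V → ℝ, (∀ x, u x ∈ Set.Icc (0 : ℝ) 1) ∧
        T = (∑ x, ((1 - u x) * Cs x + u x * Ct x)) + α * ∑ e, |grad u e| } :=
  maxflow_mincut_duality_general grad dvg hadj Cs Ct α hα
end

section
/- Dual of TV-L2 denoising (discrete): the minimizer u* of F(u) = (1/2)‖u - f‖² + α·TV(u) over ℝᵛ, with TV(u) = Σₑ|(∇u)(e)|, satisfies u* = f + div p* where p* solves max over {p : |p(e)| ≤ α for all e} of -⟨div p, f⟩ - (1/2)‖div p‖²; equivalently u* = f - proj onto the set {−div p : ‖p‖∞ ≤ α} applied appropriately, and strong duality min F = dual max value holds. -/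
/-!
Let `p*` minimize `‖f + div p‖²` over the box `‖p‖∞ ≤ α`; it exists by compactness, and since
the dual objective equals `½‖f‖² - ½‖f + div p‖²`, it is a dual maximizer. Testing the first-order
condition of this projection against `q = α • sign (∇u₀)`, where `u₀ = f + div p*`, gives
`⟨∇u₀, p*⟩ = α TV(u₀)`, i.e. `F(u₀)` equals the dual value at `p*`. Weak duality
`dual(p) ≤ F(u)` then makes `u₀` a minimizer of `F`, and `F` is strongly convex, so `u* = u₀`.
-/

open Finset Filter Topology Metric

section FirstOrder

variable {V : Type*} [Fintype V]

lemma sum_mul_nonneg_of_forall_sum_sq_le {a w : V → ℝ}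
    (h : ∀ t : ℝ, 0 < t → t ≤ 1 → ∑ x, a x ^ 2 ≤ ∑ x, (a x + t * w x) ^ 2) :
    0 ≤ ∑ x, a x * w x := by
  set A := ∑ x, a x * w x
  set B := ∑ x, w x ^ 2
  have hexpand (t : ℝ) : ∑ x, (a x + t * w x) ^ 2 = ∑ x, a x ^ 2 + t * (2 * A + t * B) := by
    simp only [A, B, mul_sum, ← sum_add_distrib]
    exact sum_congr rfl fun x _ => by ring
  have hlim : Tendsto (fun t : ℝ => 2 * A + t * B) (𝓝[>] 0) (𝓝 (2 * A + 0 * B)) :=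
    ((continuous_const.add (continuous_id.mul continuous_const)).tendsto 0).mono_left
      nhdsWithin_le_nhds
  have hev : ∀ᶠ t in 𝓝[>] (0 : ℝ), 0 ≤ 2 * A + t * B := by
    filter_upwards [Ioo_mem_nhdsGT one_pos] with t ⟨ht0, ht1⟩
    have := h t ht0 ht1.le
    rw [hexpand] at this
    exact nonneg_of_mul_nonneg_right (by linarith) ht0
  have := ge_of_tendsto hlim hev
  linarith

variable {M : Type*} [AddCommGroup M] [Module ℝ M]

lemma sum_mul_sub_nonneg_of_isMinOn {K : Set M} (hK : Convex ℝ K) (φ : M →ₗ[ℝ] V → ℝ)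
    (f : V → ℝ) {p q : M} (hmin : IsMinOn (fun p => ∑ x, (f x + φ p x) ^ 2) K p)
    (hp : p ∈ K) (hq : q ∈ K) :
    0 ≤ ∑ x, (f x + φ p x) * (φ q x - φ p x) := by
  refine sum_mul_nonneg_of_forall_sum_sq_le fun t ht0 ht1 => ?_
  have hmem := hK.add_smul_sub_mem hp hq ⟨ht0.le, ht1⟩
  have := isMinOn_iff.mp hmin _ hmem
  simp only [map_add, map_smul, map_sub, Pi.add_apply, Pi.smul_apply,
    Pi.sub_apply, smul_eq_mul] at this
  simpa only [add_assoc] using this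

end FirstOrder

section Box

variable {E : Type*} [Fintype E]

lemma mem_closedBall_zero_iff_forall_abs_le {α : ℝ} (hα : 0 ≤ α) {p : E → ℝ} :
    p ∈ closedBall 0 α ↔ ∀ e, |p e| ≤ α := by
  simp only [mem_closedBall_zero_iff, pi_norm_le_iff_of_nonneg hα, Real.norm_eq_abs]

lemma sum_mul_le_mul_sum_abs {α : ℝ} {g p : E → ℝ} (hp : ∀ e, |p e| ≤ α) :
    ∑ e, g e * p e ≤ α * ∑ e, |g e| := by
  rw [mul_sum]
  refine sum_le_sum fun e _ => ?_
  calc g e * p e ≤ |g e| * |p e| := by rw [← abs_mul]; exact le_abs_self _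
    _ ≤ α * |g e| := by rw [mul_comm]; gcongr; exact hp e

lemma abs_mul_sign_le {α : ℝ} (hα : 0 ≤ α) (x : ℝ) : |α * SignType.sign x| ≤ α := by
  rw [abs_mul, abs_of_nonneg hα]
  refine mul_le_of_le_one_right hα ?_
  cases SignType.sign x <;> simp

lemma sum_mul_mul_sign (α : ℝ) (g : E → ℝ) :
    ∑ e, g e * (α * SignType.sign (g e)) = α * ∑ e, |g e| := by
  rw [mul_sum]
  exact sum_congr rfl fun e _ => by rw [mul_left_comm, self_mul_sign]

end Box

noncomputable section ROF

variable {V E : Type*} [Fintype V]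
  (grad : (V → ℝ) →ₗ[ℝ] (E → ℝ)) (dvg : (E → ℝ) →ₗ[ℝ] (V → ℝ)) (f : V → ℝ) (α : ℝ)

def rofDual (p : E → ℝ) : ℝ :=
  -(∑ x, dvg p x * f x) - (1 / 2) * (∑ x, (dvg p x) ^ 2)

lemma rofDual_eq (p : E → ℝ) :
    rofDual dvg f p = (1 / 2) * (∑ x, (f x) ^ 2) - (1 / 2) * (∑ x, (f x + dvg p x) ^ 2) := by
  simp only [rofDual, mul_sum, ← sum_neg_distrib, ← sum_sub_distrib]
  exact sum_congr rfl fun x _ => by ring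

variable [Fintype E]

def rofEnergy (u : V → ℝ) : ℝ :=
  (1 / 2) * (∑ x, (u x - f x) ^ 2) + α * ∑ e, |grad u e|

variable {grad dvg}

lemma rofDual_le_rofEnergy (hadj : ∀ u p, ∑ x, dvg p x * u x = -∑ e, grad u e * p e)
    {p : E → ℝ} (hp : ∀ e, |p e| ≤ α) (u : V → ℝ) :
    rofDual dvg f p ≤ rofEnergy grad f α u := by
  have hpointwise : ∑ x, (-(dvg p x * f x) - (1 / 2) * dvg p x ^ 2)
      ≤ ∑ x, ((1 / 2) * (u x - f x) ^ 2 - dvg p x * u x) :=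
    sum_le_sum fun x _ => by nlinarith [sq_nonneg (u x - f x - dvg p x)]
  simp only [sum_sub_distrib, sum_neg_distrib, ← mul_sum] at hpointwise
  have := sum_mul_le_mul_sum_abs (g := grad u) hp
  rw [rofDual, rofEnergy]
  linarith [hadj u p]

lemma rofEnergy_add_dvg_eq_rofDual (hadj : ∀ u p, ∑ x, dvg p x * u x = -∑ e, grad u e * p e)
    (hα : 0 ≤ α) {p : E → ℝ} (hp : p ∈ closedBall 0 α)
    (hmin : IsMinOn (fun p => ∑ x, (f x + dvg p x) ^ 2) (closedBall 0 α) p) :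
    rofEnergy grad f α (f + dvg p) = rofDual dvg f p := by
  set u := f + dvg p
  have hpα := (mem_closedBall_zero_iff_forall_abs_le hα).mp hp
  -- `q = α • sign (∇u)` attains the bound of `sum_mul_le_mul_sum_abs`, and the variational
  -- inequality says that `p` does at least as well as `q`.
  set q : E → ℝ := fun e => α * SignType.sign (grad u e)
  have hq : q ∈ closedBall 0 α :=
    (mem_closedBall_zero_iff_forall_abs_le hα).mpr fun e => abs_mul_sign_le hα _
  have hvi : 0 ≤ ∑ x, u x * (dvg q x - dvg p x) :=
    sum_mul_sub_nonneg_of_isMinOn (convex_closedBall 0 α) dvg f hmin hp hq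
  have hsplit : ∑ x, u x * (dvg q x - dvg p x) = ∑ x, dvg q x * u x - ∑ x, dvg p x * u x := by
    rw [← sum_sub_distrib]
    exact sum_congr rfl fun x _ => by ring
  rw [hsplit, hadj, hadj, sum_mul_mul_sign] at hvi
  have htv : ∑ e, grad u e * p e = α * ∑ e, |grad u e| :=
    le_antisymm (sum_mul_le_mul_sum_abs hpα) (by linarith)
  have hu : ∑ x, dvg p x * u x = ∑ x, dvg p x * f x + ∑ x, dvg p x ^ 2 := by
    rw [← sum_add_distrib]
    exact sum_congr rfl fun x _ => by simp only [u, Pi.add_apply]; ring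
  have hres : ∑ x, (u x - f x) ^ 2 = ∑ x, dvg p x ^ 2 :=
    sum_congr rfl fun x _ => by simp only [u, Pi.add_apply, add_sub_cancel_left]
  rw [rofEnergy, rofDual, hres, ← htv]
  linarith [hadj u p]

lemma rofEnergy_midpoint_le (hα : 0 ≤ α) (u v : V → ℝ) :
    rofEnergy grad f α ((1 / 2 : ℝ) • (u + v)) ≤
      (rofEnergy grad f α u + rofEnergy grad f α v) / 2 - (1 / 8) * ∑ x, (u x - v x) ^ 2 := by
  have hfid : ∑ x, (((1 / 2 : ℝ) • (u + v)) x - f x) ^ 2 = (1 / 2) * ∑ x, (u x - f x) ^ 2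
      + (1 / 2) * ∑ x, (v x - f x) ^ 2 - (1 / 4) * ∑ x, (u x - v x) ^ 2 := by
    simp only [mul_sum, ← sum_add_distrib, ← sum_sub_distrib]
    exact sum_congr rfl fun x _ => by simp only [Pi.smul_apply, Pi.add_apply, smul_eq_mul]; ring
  have htv : ∑ e, |grad ((1 / 2 : ℝ) • (u + v)) e| ≤ (∑ e, |grad u e| + ∑ e, |grad v e|) / 2 := by
    rw [← sum_add_distrib, sum_div]
    refine sum_le_sum fun e _ => ?_
    simp only [map_smul, map_add, Pi.smul_apply, Pi.add_apply, smul_eq_mul, abs_mul]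
    have := abs_add_le (grad u e) (grad v e)
    rw [abs_of_pos (by norm_num : (0 : ℝ) < 1 / 2)]
    linarith
  have := mul_le_mul_of_nonneg_left htv hα
  rw [rofEnergy, rofEnergy, rofEnergy, hfid]
  linarith

lemma eq_of_forall_rofEnergy_le (hα : 0 ≤ α) {u v : V → ℝ}
    (hu : ∀ w, rofEnergy grad f α u ≤ rofEnergy grad f α w)
    (hv : ∀ w, rofEnergy grad f α v ≤ rofEnergy grad f α w) : u = v := by
  have hmid := rofEnergy_midpoint_le (grad := grad) f α hα u v
  have hzero : ∑ x, (u x - v x) ^ 2 = 0 := by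
    refine le_antisymm ?_ (sum_nonneg fun x _ => sq_nonneg _)
    linarith [hu ((1 / 2 : ℝ) • (u + v)), hu v, hv u]
  funext x
  have := (sum_eq_zero_iff_of_nonneg fun x _ => sq_nonneg (u x - v x)).mp hzero x (mem_univ x)
  exact sub_eq_zero.mp (pow_eq_zero_iff two_ne_zero |>.mp this)

end ROF

/-- Discrete Chambolle dual of the ROF (TV-L2) model: the minimizer `u*` of
`F(u) = (1/2)‖u-f‖² + α Σₑ|∇u(e)|` satisfies `u* = f + div p*` where `p*` maximizes
`-⟨div p, f⟩ - (1/2)‖div p‖²` over `‖p‖∞ ≤ α`, and strong duality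
`min F = (1/2)‖f‖² - (1/2)‖f + div p*‖²` holds. -/
theorem rof_dual {V E : Type*} [Fintype V] [Fintype E]
    (grad : (V → ℝ) →ₗ[ℝ] (E → ℝ)) (dvg : (E → ℝ) →ₗ[ℝ] (V → ℝ))
    (hadj : ∀ (u : V → ℝ) (p : E → ℝ), ∑ x, dvg p x * u x = -∑ e, grad u e * p e)
    (f : V → ℝ) (α : ℝ) (hα : 0 < α)
    (F : (V → ℝ) → ℝ)
    (hF : ∀ u, F u = (1 / 2) * (∑ x, (u x - f x) ^ 2) + α * ∑ e, |grad u e|)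
    (ustar : V → ℝ) (hmin : ∀ u, F ustar ≤ F u) :
    ∃ pstar : E → ℝ, (∀ e, |pstar e| ≤ α) ∧
      ustar = (fun x => f x + dvg pstar x) ∧
      (∀ p : E → ℝ, (∀ e, |p e| ≤ α) →
        -(∑ x, dvg p x * f x) - (1 / 2) * (∑ x, (dvg p x) ^ 2) ≤
          -(∑ x, dvg pstar x * f x) - (1 / 2) * (∑ x, (dvg pstar x) ^ 2)) ∧
      F ustar = (1 / 2) * (∑ x, (f x) ^ 2) -
        (1 / 2) * (∑ x, (f x + dvg pstar x) ^ 2) := by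
  obtain rfl : F = rofEnergy grad f α := funext hF
  have hbox (p : E → ℝ) := mem_closedBall_zero_iff_forall_abs_le (p := p) hα.le
  have hdvg : Continuous dvg := dvg.continuous_of_finiteDimensional
  obtain ⟨pstar, hpstar, hproj⟩ := (isCompact_closedBall (0 : E → ℝ) α).exists_isMinOn
    (nonempty_closedBall.mpr hα.le)
    (by fun_prop : Continuous fun p => ∑ x, (f x + dvg p x) ^ 2).continuousOn
  have hval := rofEnergy_add_dvg_eq_rofDual f α hadj hα.le hpstar hproj
  have hu₀min (u : V → ℝ) : rofEnergy grad f α (f + dvg pstar) ≤ rofEnergy grad f α u := by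
    rw [hval]
    exact rofDual_le_rofEnergy f α hadj ((hbox pstar).mp hpstar) u
  have hustar : ustar = f + dvg pstar := eq_of_forall_rofEnergy_le f α hα.le hmin hu₀min
  refine ⟨pstar, (hbox pstar).mp hpstar, hustar, fun p hp => ?_, ?_⟩
  · have := isMinOn_iff.mp hproj p ((hbox p).mpr hp)
    change rofDual dvg f p ≤ rofDual dvg f pstar
    rw [rofDual_eq, rofDual_eq]
    linarith
  · rw [hustar, hval, rofDual_eq]
end
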